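/- For every y > e, z(y) = lim_{n→∞} z_n(y); that is, the inverse function of y = z log z is given by the infinite nested logarithm fraction z(y) = y / log( y / log( y / log ⋯ )). -/
import Mathlib


open Real Filter

/-- `z(y)`: the inverse function of `y(z) = z log z`, `z ≥ 1/e`. -/
noncomputable def zFun (y : ℝ) : ℝ :=
  Function.invFunOn (fun x : ℝ => x * Real.log x) (Set.Ici (Real.exp (-1))) y

/-- `z_0(y) = y`, `z_n(y) = y / log z_{n-1}(y)` for `n ≥ 1`. -/
noncomputable def zIter : ℕ → ℝ → ℝ
  | 0, y => y
  | n + 1, y => y / Real.log (zIter n y)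

private lemma sm_mul_log : StrictMonoOn (fun x : ℝ => x * Real.log x)
    (Set.Ici (Real.exp (-1))) := by
  apply strictMonoOn_of_deriv_pos (convex_Ici _)
  · exact continuousOn_id.mul (Real.continuousOn_log.mono (fun x hx => by
      simp only [Set.mem_compl_iff, Set.mem_singleton_iff]
      exact ne_of_gt (lt_of_lt_of_le (Real.exp_pos _) hx)))
  · intro x hx
    rw [interior_Ici] at hx
    have hx0 : (0:ℝ) < x := lt_trans (Real.exp_pos _) hx
    have hd : HasDerivAt (fun x : ℝ => x * Real.log x) (1 * Real.log x + x * x⁻¹) x :=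
      (hasDerivAt_id x).mul (Real.hasDerivAt_log hx0.ne')
    rw [hd.deriv]
    have hlog : (-1:ℝ) < Real.log x := by
      have := Real.log_lt_log (Real.exp_pos _) hx
      rwa [Real.log_exp] at this
    have : x * x⁻¹ = 1 := mul_inv_cancel₀ hx0.ne'
    rw [this]
    linarith

/-- `|log u - log v| ≤ |u - v| / m` when `u, v ≥ m > 0`. -/
private lemma abs_log_sub_le {m u v : ℝ} (hm : 0 < m) (hu : m ≤ u) (hv : m ≤ v) :
    |Real.log u - Real.log v| ≤ |u - v| / m := by
  have key : ∀ a b : ℝ, m ≤ a → m ≤ b → a ≤ b →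
      |Real.log a - Real.log b| ≤ |a - b| / m := by
    intro a b ha hb hab
    have ha0 : (0:ℝ) < a := lt_of_lt_of_le hm ha
    have hb0 : (0:ℝ) < b := lt_of_lt_of_le hm hb
    have hlog : Real.log a ≤ Real.log b := Real.log_le_log ha0 hab
    rw [abs_sub_comm (Real.log a), abs_sub_comm a, abs_of_nonneg (by linarith : (0:ℝ) ≤ Real.log b - Real.log a), abs_of_nonneg (by linarith : (0:ℝ) ≤ b - a)]
    have h1 : Real.log b - Real.log a = Real.log (b / a) := (Real.log_div hb0.ne' ha0.ne').symm
    rw [h1]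
    have h2 : Real.log (b / a) ≤ b / a - 1 := Real.log_le_sub_one_of_pos (div_pos hb0 ha0)
    have h3 : b / a - 1 = (b - a) / a := by field_simp
    have h4 : (b - a) / a ≤ (b - a) / m := div_le_div_of_nonneg_left (by linarith) hm ha
    linarith
  rcases le_total u v with h | h
  · exact key u v hu hv h
  · have := key v u hv hu h
    rwa [abs_sub_comm (Real.log v), abs_sub_comm v] at this

theorem zIter_tendsto_zFun (y : ℝ) (hy : y > Real.exp 1) :
    Tendsto (fun n => zIter n y) atTop (nhds (zFun y)) := by
  have he1 : Real.exp (-1) ≤ Real.exp 1 := Real.exp_le_exp.mpr (by norm_num)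
  have hy0 : (0:ℝ) < y := lt_trans (Real.exp_pos 1) hy
  have hlogy : (1:ℝ) < Real.log y := by
    have := Real.log_lt_log (Real.exp_pos 1) hy
    rwa [Real.log_exp] at this
  -- existence of a preimage via IVT
  have hfy : y ≤ y * Real.log y := le_mul_of_one_le_right hy0.le hlogy.le
  have hcont : ContinuousOn (fun x : ℝ => x * Real.log x) (Set.Icc (Real.exp 1) y) :=
    continuousOn_id.mul (Real.continuousOn_log.mono (fun x hx => by
      simp only [Set.mem_compl_iff, Set.mem_singleton_iff]
      exact ne_of_gt (lt_of_lt_of_le (Real.exp_pos 1) hx.1)))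
  have hIVT := intermediate_value_Icc hy.le hcont
  have hymem : y ∈ Set.Icc (Real.exp 1 * Real.log (Real.exp 1)) (y * Real.log y) := by
    rw [Real.log_exp, mul_one]; exact ⟨hy.le, hfy⟩
  obtain ⟨z, hzmem, hzeq⟩ := hIVT hymem
  have hex : ∃ a, a ∈ Set.Ici (Real.exp (-1)) ∧ (fun x : ℝ => x * Real.log x) a = y :=
    ⟨z, le_trans he1 hzmem.1, hzeq⟩
  set w := zFun y with hw_def
  have hw_mem : w ∈ Set.Ici (Real.exp (-1)) := Function.invFunOn_mem hex
  have hw_eq : w * Real.log w = y := Function.invFunOn_eq hex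
  -- w > e
  have hw_gt : Real.exp 1 < w := by
    by_contra h
    push_neg at h
    have : w * Real.log w ≤ Real.exp 1 * Real.log (Real.exp 1) :=
      sm_mul_log.monotoneOn hw_mem (Set.mem_Ici.mpr he1) h
    rw [Real.log_exp, mul_one, hw_eq] at this
    linarith
  have hw0 : (0:ℝ) < w := lt_trans (Real.exp_pos 1) hw_gt
  set L := Real.log w with hL_def
  have hL : (1:ℝ) < L := by
    have := Real.log_lt_log (Real.exp_pos 1) hw_gt
    rwa [Real.log_exp] at this
  have hL0 : (0:ℝ) < L := lt_trans one_pos hL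
  have hwL : w = y / L := by
    field_simp [hL0.ne']
    linarith [hw_eq]
  -- z1 = y / log y
  set z1 := y / Real.log y with hz1_def
  have hz1_gt : Real.exp 1 < z1 := by
    -- e * log y < y
    have hne : y / Real.exp 1 ≠ 1 := by
      intro h
      have : y = Real.exp 1 := by
        field_simp at h; linarith
      linarith
    have h1 : Real.log (y / Real.exp 1) < y / Real.exp 1 - 1 :=
      Real.log_lt_sub_one_of_pos (div_pos hy0 (Real.exp_pos 1)) hne
    rw [Real.log_div hy0.ne' (Real.exp_pos 1).ne', Real.log_exp] at h1
    have he0 : (0:ℝ) < Real.exp 1 := Real.exp_pos 1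
    have h2 : Real.exp 1 * Real.log y < y := by
      have h3 : Real.log y < y / Real.exp 1 := by linarith
      have := (lt_div_iff₀ he0).mp h3
      linarith
    rw [hz1_def, lt_div_iff₀ (by linarith : (0:ℝ) < Real.log y)]
    nlinarith
  have hz1_le : z1 ≤ y := by
    rw [hz1_def]
    exact div_le_self hy0.le hlogy.le
  have hlogz1 : (1:ℝ) < Real.log z1 := by
    have := Real.log_lt_log (Real.exp_pos 1) hz1_gt
    rwa [Real.log_exp] at this
  have hz10 : (0:ℝ) < z1 := lt_trans (Real.exp_pos 1) hz1_gt
  -- bounds: z1 ≤ zIter n y ≤ y for all n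
  have hbounds : ∀ n, z1 ≤ zIter n y ∧ zIter n y ≤ y := by
    intro n
    induction n with
    | zero => exact ⟨hz1_le, le_refl y⟩
    | succ n ih =>
      obtain ⟨h1, h2⟩ := ih
      have hzn0 : (0:ℝ) < zIter n y := lt_of_lt_of_le hz10 h1
      have hlogzn : (1:ℝ) < Real.log (zIter n y) :=
        lt_of_lt_of_le hlogz1 (Real.log_le_log hz10 h1)
      have hlogzn_le : Real.log (zIter n y) ≤ Real.log y := Real.log_le_log hzn0 h2
      constructor
      · show z1 ≤ y / Real.log (zIter n y)
        rw [hz1_def]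
        exact div_le_div_of_nonneg_left hy0.le (by linarith) hlogzn_le
      · show y / Real.log (zIter n y) ≤ y
        exact div_le_self hy0.le hlogzn.le
  -- key contraction in log scale
  set m := min (Real.log z1) L with hm_def
  have hm1 : (1:ℝ) < m := lt_min hlogz1 hL
  have hm0 : (0:ℝ) < m := lt_trans one_pos hm1
  have hLlog : L = Real.log y - Real.log L := by
    conv_lhs => rw [hL_def, hwL]
    rw [Real.log_div hy0.ne' hL0.ne']
  have hlog_bound : ∀ n, m ≤ Real.log (zIter n y) := by
    intro n
    calc m ≤ Real.log z1 := min_le_left _ _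
    _ ≤ Real.log (zIter n y) := Real.log_le_log hz10 (hbounds n).1
  have hkey : ∀ n, |Real.log (zIter (n+1) y) - L| ≤ |Real.log (zIter n y) - L| / m := by
    intro n
    have hzn0 : (0:ℝ) < zIter n y := lt_of_lt_of_le hz10 (hbounds n).1
    have hlogzn : (1:ℝ) < Real.log (zIter n y) :=
      lt_of_lt_of_le hlogz1 (Real.log_le_log hz10 (hbounds n).1)
    have h1 : Real.log (zIter (n+1) y) = Real.log y - Real.log (Real.log (zIter n y)) := by
      show Real.log (y / Real.log (zIter n y)) = _
      rw [Real.log_div hy0.ne' (by linarith : Real.log (zIter n y) ≠ 0)]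
    rw [h1]
    have h2 : Real.log y - Real.log (Real.log (zIter n y)) - L
        = Real.log L - Real.log (Real.log (zIter n y)) := by
      linear_combination -hLlog
    rw [h2, abs_sub_comm (Real.log (zIter n y)) L]
    exact abs_log_sub_le hm0 (min_le_right _ _) (hlog_bound n)
  -- geometric decay
  have hgeom : ∀ n, |Real.log (zIter n y) - L| ≤ |Real.log y - L| * (1/m)^n := by
    intro n
    induction n with
    | zero => simp [zIter]
    | succ n ih =>
      calc |Real.log (zIter (n+1) y) - L| ≤ |Real.log (zIter n y) - L| / m := hkey n
      _ ≤ (|Real.log y - L| * (1/m)^n) / m := by gcongr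
      _ = |Real.log y - L| * (1/m)^(n+1) := by
          rw [pow_succ]; field_simp
  -- conclude
  have hm_lt : (1/m : ℝ) < 1 := by
    rw [div_lt_one hm0]; exact hm1
  have hm_nonneg : (0:ℝ) ≤ 1/m := by positivity
  have htend0 : Tendsto (fun n => |Real.log y - L| * (1/m)^n) atTop (nhds 0) := by
    have := tendsto_pow_atTop_nhds_zero_of_lt_one hm_nonneg hm_lt
    simpa using this.const_mul (|Real.log y - L|)
  have habs : Tendsto (fun n => |Real.log (zIter n y) - L|) atTop (nhds 0) :=
    squeeze_zero (fun n => abs_nonneg _) hgeom htend0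
  have hlogtend : Tendsto (fun n => Real.log (zIter n y)) atTop (nhds L) := by
    rw [tendsto_iff_dist_tendsto_zero]
    simpa [Real.dist_eq] using habs
  have hexp : Tendsto (fun n => Real.exp (Real.log (zIter n y))) atTop (nhds (Real.exp L)) :=
    (Real.continuous_exp.tendsto L).comp hlogtend
  have hexpL : Real.exp L = w := Real.exp_log hw0
  rw [← hexpL]
  apply hexp.congr
  intro n
  exact Real.exp_log (lt_of_lt_of_le hz10 (hbounds n).1)
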